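/- Let f be a symmetric norm on ℝ^n and let ‖·‖_f be the induced unitarily invariant norm on B(H). Then ‖·‖_f is an algebra norm (that is, ‖AB‖_f ≤ ‖A‖_f · ‖B‖_f for all A, B ∈ B(H) and ‖I‖_f = f(1, 1, …, 1) = 1) if and only if ‖·‖_f is the operator norm, i.e., ‖A‖_f = s_1(A) for all A ∈ B(H). -/

import Mathlib

open scoped InnerProductSpace

variable {H : Type*} [NormedAddCommGroup H] [InnerProductSpace ℂ H] [CompleteSpace H]

/-- The `k`-th singular value (1-indexed) of a bounded operator `A`:
`s_k(A) = inf {‖A - X‖ : rank X < k}`. -/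
noncomputable def sval (k : ℕ) (A : H →L[ℂ] H) : ℝ :=
  sInf { r : ℝ | ∃ X : H →L[ℂ] H,
    Module.rank ℂ (LinearMap.range (X : H →ₗ[ℂ] H)) < (k : Cardinal) ∧ r = ‖A - X‖ }

/-- `f : ℝ^n → ℝ` is a symmetric norm: a norm invariant under permutations of the
coordinates and under sign changes of the coordinates. -/
structure IsSymmetricNorm (n : ℕ) (f : (Fin n → ℝ) → ℝ) : Prop where
  triangle : ∀ x y, f (x + y) ≤ f x + f y
  homog : ∀ (t : ℝ) (x), f (t • x) = |t| * f x
  definite : ∀ x, x ≠ 0 → 0 < f x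
  perm_invariant : ∀ (σ : Equiv.Perm (Fin n)) (x), f (fun i => x (σ i)) = f x
  sign_invariant : ∀ (ε : Fin n → ℝ), (∀ i, ε i = 1 ∨ ε i = -1) →
    ∀ x, f (fun i => ε i * x i) = f x

/-- The unitarily invariant norm induced by a symmetric norm `f` on `ℝ^n`:
`‖A‖_f = f (s_1(A), …, s_n(A))`. -/
noncomputable def normf (n : ℕ) (f : (Fin n → ℝ) → ℝ) (A : H →L[ℂ] H) : ℝ :=
  f (fun j : Fin n => sval (j.1 + 1) A)

/-! By monotonicity of a symmetric norm in the absolute values of the coordinates, and since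
`s₁(A) ≥ s_k(A) ≥ 0`, every `A` satisfies `s₁(A) f(e₁) ≤ ‖A‖_f ≤ s₁(A) f(1, …, 1)`. If `‖·‖_f` is
submultiplicative, a rank-one orthogonal projection `P` has `‖P‖_f = f(e₁)` and `P² = P`, which
forces `f(e₁) ≥ 1`; with `f(1, …, 1) = 1` the two bounds squeeze `‖A‖_f` to `s₁(A)`. Conversely,
`s_k(I) = 1` for `k ≤ dim H`: for `X` of rank `< k` there is a unit vector `u ⊥ ran X`, and
`⟪(I - X) u, u⟫ = 1`. -/

variable {E : Type*} [NormedAddCommGroup E] [InnerProductSpace ℂ E]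

lemma sval_nonneg (k : ℕ) (A : E →L[ℂ] E) : 0 ≤ sval k A :=
  Real.sInf_nonneg (by rintro _ ⟨X, -, rfl⟩; exact norm_nonneg _)

lemma sval_le_norm_sub {k : ℕ} (A : E →L[ℂ] E) {X : E →L[ℂ] E}
    (hX : Module.rank ℂ (LinearMap.range (X : E →ₗ[ℂ] E)) < k) : sval k A ≤ ‖A - X‖ :=
  csInf_le ⟨0, by rintro _ ⟨Y, -, rfl⟩; exact norm_nonneg _⟩ ⟨X, hX, rfl⟩

lemma sval_le_norm {k : ℕ} (hk : 0 < k) (A : E →L[ℂ] E) : sval k A ≤ ‖A‖ := by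
  simpa using sval_le_norm_sub (k := k) A (X := 0) (by simpa using hk)

lemma le_sval {k : ℕ} (hk : 0 < k) {A : E →L[ℂ] E} {r : ℝ}
    (h : ∀ X : E →L[ℂ] E, Module.rank ℂ (LinearMap.range (X : E →ₗ[ℂ] E)) < k → r ≤ ‖A - X‖) :
    r ≤ sval k A :=
  le_csInf ⟨‖A - 0‖, 0, by simpa using hk, rfl⟩ (by rintro _ ⟨X, hX, rfl⟩; exact h X hX)

lemma sval_eq_zero_of_rank_lt {k : ℕ} {A : E →L[ℂ] E}
    (hA : Module.rank ℂ (LinearMap.range (A : E →ₗ[ℂ] E)) < k) : sval k A = 0 :=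
  le_antisymm (by simpa using sval_le_norm_sub A hA) (sval_nonneg k A)

lemma sval_one_eq_norm (A : E →L[ℂ] E) : sval 1 A = ‖A‖ := by
  refine le_antisymm (sval_le_norm one_pos A) (le_sval one_pos fun X hX => ?_)
  have hX0 : X = 0 := by
    rw [Nat.cast_one, Cardinal.lt_one_iff, Submodule.rank_eq_zero, LinearMap.range_eq_bot] at hX
    exact ContinuousLinearMap.coe_injective hX
  rw [hX0, sub_zero]

lemma Submodule.exists_norm_eq_one_mem_orthogonal {𝕜 E : Type*} [RCLike 𝕜]
    [NormedAddCommGroup E] [InnerProductSpace 𝕜 E] {K : Submodule 𝕜 E}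
    [K.HasOrthogonalProjection] (hK : K ≠ ⊤) : ∃ u ∈ Kᗮ, ‖u‖ = 1 := by
  obtain ⟨v, hvK, hv0⟩ :=
    Submodule.exists_mem_ne_zero_of_ne_bot (mt Submodule.orthogonal_eq_bot_iff.mp hK)
  exact ⟨(‖v‖ : 𝕜)⁻¹ • v, Kᗮ.smul_mem _ hvK, norm_smul_inv_norm hv0⟩

lemma one_le_norm_one_sub_of_rank_lt {k : ℕ} (hkH : (k : Cardinal) ≤ Module.rank ℂ E)
    {X : E →L[ℂ] E} (hX : Module.rank ℂ (LinearMap.range (X : E →ₗ[ℂ] E)) < k) :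
    1 ≤ ‖1 - X‖ := by
  set K := LinearMap.range (X : E →ₗ[ℂ] E)
  have : FiniteDimensional ℂ K :=
    Module.rank_lt_aleph0_iff.mp (hX.trans Cardinal.natCast_lt_aleph0)
  have hK : K ≠ ⊤ := by
    intro htop
    have : Module.rank ℂ E < k := by rwa [← rank_top ℂ E, ← htop]
    exact (hkH.trans_lt this).false
  obtain ⟨u, huK, hu⟩ := Submodule.exists_norm_eq_one_mem_orthogonal hK
  have hXu : ⟪X u, u⟫_ℂ = 0 := (K.mem_orthogonal u).mp huK (X u) ⟨u, rfl⟩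
  have hinner : ⟪(1 - X) u, u⟫_ℂ = 1 := by
    rw [sub_apply, one_apply_eq_self, inner_sub_left, hXu,
      sub_zero, inner_self_eq_norm_sq_to_K, hu]
    norm_num
  calc (1 : ℝ) = ‖⟪(1 - X) u, u⟫_ℂ‖ := by rw [hinner, norm_one]
    _ ≤ ‖(1 - X) u‖ * ‖u‖ := norm_inner_le_norm _ _
    _ ≤ ‖1 - X‖ * ‖u‖ * ‖u‖ := by gcongr; exact (1 - X).le_opNorm u
    _ = ‖1 - X‖ := by rw [hu, mul_one, mul_one]

lemma sval_id {k : ℕ} (hk : 0 < k) (hkH : (k : Cardinal) ≤ Module.rank ℂ E) :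
    sval k (1 : E →L[ℂ] E) = 1 := by
  have : Nontrivial E :=
    rank_pos_iff_nontrivial.mp (lt_of_lt_of_le (by exact_mod_cast hk) hkH)
  refine le_antisymm ?_ (le_sval hk fun X hX => one_le_norm_one_sub_of_rank_lt hkH hX)
  simpa using sval_le_norm hk (1 : E →L[ℂ] E)

lemma exists_isIdempotentElem_norm_eq_one_rank_le_one [Nontrivial E] :
    ∃ P : E →L[ℂ] E, IsIdempotentElem P ∧ ‖P‖ = 1 ∧
      Module.rank ℂ (LinearMap.range (P : E →ₗ[ℂ] E)) ≤ 1 := by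
  obtain ⟨v, hv⟩ := exists_ne (0 : E)
  set K := ℂ ∙ v
  have hK : K ≠ ⊥ := by simpa [K] using hv
  refine ⟨K.starProjection, K.isIdempotentElem_starProjection, K.norm_starProjection hK, ?_⟩
  rw [K.range_starProjection]
  exact (rank_span_le _).trans (Cardinal.mk_singleton v).le

namespace IsSymmetricNorm

variable {n : ℕ} {f : (Fin n → ℝ) → ℝ}

lemma map_update_neg (hf : IsSymmetricNorm n f) (z : Fin n → ℝ) (i : Fin n) (b : ℝ) :
    f (Function.update z i (-b)) = f (Function.update z i b) := by
  have hε : ∀ j, Function.update (1 : Fin n → ℝ) i (-1) j = 1 ∨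
      Function.update (1 : Fin n → ℝ) i (-1) j = -1 := by
    intro j
    rcases eq_or_ne j i with rfl | h <;> simp [*]
  rw [← hf.sign_invariant _ hε]
  congr 1
  funext j
  rcases eq_or_ne j i with rfl | h <;> simp [*]

lemma map_update_le (hf : IsSymmetricNorm n f) (z : Fin n → ℝ) (i : Fin n) {a b : ℝ}
    (hab : |a| ≤ |b|) : f (Function.update z i a) ≤ f (Function.update z i b) := by
  rcases eq_or_ne b 0 with rfl | hb
  · rw [abs_zero, abs_nonpos_iff] at hab
    rw [hab]
  -- `a` is a convex combination of `b` and `-b`, and `f` takes the same value at both.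
  set t := (1 + a / b) / 2
  have hab' : |a / b| ≤ 1 := by rwa [abs_div, div_le_one (abs_pos.mpr hb)]
  have ht0 : 0 ≤ t := by simp only [t]; linarith [neg_le_of_abs_le hab']
  have ht1 : 0 ≤ 1 - t := by simp only [t]; linarith [le_of_abs_le hab']
  have hcomb : Function.update z i a =
      t • Function.update z i b + (1 - t) • Function.update z i (-b) := by
    funext j
    rcases eq_or_ne j i with rfl | h
    · simp only [Pi.add_apply, Pi.smul_apply, smul_eq_mul, Function.update_self, t]
      field_simp
      ring
    · simp only [Pi.add_apply, Pi.smul_apply, smul_eq_mul, Function.update_of_ne h]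
      ring
  calc f (Function.update z i a)
      ≤ f (t • Function.update z i b) + f ((1 - t) • Function.update z i (-b)) :=
        hcomb ▸ hf.triangle _ _
    _ = f (Function.update z i b) := by
        rw [hf.homog, hf.homog, hf.map_update_neg, abs_of_nonneg ht0, abs_of_nonneg ht1]
        ring

lemma mono (hf : IsSymmetricNorm n f) {x y : Fin n → ℝ} (h : ∀ i, |x i| ≤ |y i|) :
    f x ≤ f y := by
  classical
  suffices ∀ s : Finset (Fin n), f x ≤ f (s.piecewise y x) by
    simpa using this Finset.univ
  intro s
  induction s using Finset.induction_on with
  | empty => simp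
  | insert j s hj ih =>
    rw [Finset.piecewise_insert]
    refine ih.trans ?_
    conv_lhs => rw [← Function.update_eq_self j (s.piecewise y x),
      Finset.piecewise_eq_of_notMem _ _ _ hj]
    exact hf.map_update_le _ j (h j)

end IsSymmetricNorm

section InducedNorm

variable {n : ℕ} {f : (Fin n → ℝ) → ℝ}

lemma normf_le_norm_mul (hf : IsSymmetricNorm n f) (A : E →L[ℂ] E) :
    normf n f A ≤ ‖A‖ * f (fun _ => 1) := by
  rw [← abs_norm, ← hf.homog]
  refine hf.mono fun j => ?_
  simpa [abs_of_nonneg (sval_nonneg _ A)] using sval_le_norm j.succ_pos A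

lemma norm_mul_le_normf (hn : 0 < n) (hf : IsSymmetricNorm n f) (A : E →L[ℂ] E) :
    ‖A‖ * f (Pi.single ⟨0, hn⟩ 1) ≤ normf n f A := by
  rw [← abs_norm, ← hf.homog]
  refine hf.mono fun j => ?_
  rcases eq_or_ne j ⟨0, hn⟩ with rfl | hj
  · simp [sval_one_eq_norm]
  · simp [hj, abs_nonneg]

lemma normf_of_rank_le_one (hn : 0 < n) (hf : IsSymmetricNorm n f) {A : E →L[ℂ] E}
    (hA : Module.rank ℂ (LinearMap.range (A : E →ₗ[ℂ] E)) ≤ 1) :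
    normf n f A = ‖A‖ * f (Pi.single ⟨0, hn⟩ 1) := by
  rw [← abs_norm, ← hf.homog, normf]
  congr 1
  funext j
  rcases eq_or_ne j ⟨0, hn⟩ with rfl | hj
  · simp [sval_one_eq_norm]
  · have hj1 : 1 < j.1 + 1 := by
      have : j.1 ≠ 0 := fun h => hj (Fin.ext h)
      omega
    rw [sval_eq_zero_of_rank_lt (hA.trans_lt (by exact_mod_cast hj1))]
    simp [hj]

lemma normf_id (hdim : (n : Cardinal) ≤ Module.rank ℂ E) :
    normf n f (1 : E →L[ℂ] E) = f (fun _ => 1) := by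
  unfold normf
  congr 1
  funext j
  exact sval_id j.succ_pos (le_trans (by exact_mod_cast j.isLt) hdim)

lemma one_le_map_single_of_normf_comp_le [Nontrivial E] (hn : 0 < n) (hf : IsSymmetricNorm n f)
    (hsub : ∀ A B : E →L[ℂ] E, normf n f (A ∘L B) ≤ normf n f A * normf n f B) :
    1 ≤ f (Pi.single ⟨0, hn⟩ 1) := by
  obtain ⟨P, hPP, hP1, hPrank⟩ := exists_isIdempotentElem_norm_eq_one_rank_le_one (E := E)
  have hP : normf n f P = f (Pi.single ⟨0, hn⟩ 1) := by
    rw [normf_of_rank_le_one hn hf hPrank, hP1, one_mul]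
  have hpos : 0 < f (Pi.single ⟨0, hn⟩ 1) := hf.definite _ (by simp)
  have hsq := hsub P P
  rw [show P ∘L P = P from hPP, hP] at hsq
  exact (le_mul_iff_one_le_right hpos).mp hsq

end InducedNorm

theorem stmt6 (n : ℕ) (hn : 0 < n) (hdim : (n : Cardinal) ≤ Module.rank ℂ H)
    (f : (Fin n → ℝ) → ℝ) (hf : IsSymmetricNorm n f) :
    ((∀ A B : H →L[ℂ] H, normf n f (A ∘L B) ≤ normf n f A * normf n f B) ∧
        normf n f (1 : H →L[ℂ] H) = 1 ∧ f (fun _ => 1) = 1) ↔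
      (∀ A : H →L[ℂ] H, normf n f A = sval 1 A) := by
  have : Nontrivial H := rank_pos_iff_nontrivial.mp (lt_of_lt_of_le (by exact_mod_cast hn) hdim)
  constructor
  · rintro ⟨hsub, -, hone⟩ A
    have hc := one_le_map_single_of_normf_comp_le hn hf hsub
    rw [sval_one_eq_norm]
    refine le_antisymm ?_ ?_
    · simpa [hone] using normf_le_norm_mul hf A
    · calc ‖A‖ ≤ ‖A‖ * f (Pi.single ⟨0, hn⟩ 1) := le_mul_of_one_le_right (norm_nonneg A) hc
        _ ≤ normf n f A := norm_mul_le_normf hn hf A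
  · intro h
    simp only [h, sval_one_eq_norm]
    refine ⟨fun A B => A.opNorm_comp_le B, norm_one, ?_⟩
    rw [← normf_id (f := f) hdim, h, sval_one_eq_norm, norm_one]
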